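/- Let M ≥ 2 be an integer, set R = log(M−1), and suppose d(x,y) ≤ d_max for all x ∈ 𝒳, y ∈ 𝒴. Let X ~ P_X and Y₁, …, Y_M be independent with each Y_i ~ Q_Y. Then for every real λ < R: E[min_{1≤i≤M} d(X,Y_i)] ≤ D̃(e^{−(R−λ)},Q_Y) + (D̃(1,Q_Y) − D̃(e^{−(R−λ)},Q_Y)) · e^{−e^λ}(e^λ+1) ≤ D̃(e^{−(R−λ)},Q_Y) + d_max · e^{−e^λ}(e^λ+1). -/

import Mathlib

/-!
Fix `x`, write `c = d x ·`, `A v = Q{c < v}` and `C v = Q{c ≤ v}`, and group every expectation by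
the values `v` of `c`: `E[min_i c(Y_i)] = ∑_v v ((1 - A v)^M - (1 - C v)^M)`,
`E[c(Y)] = ∑_v v (C v - A v)`, and, since given `c(Y) = v` the correct probability is uniform on
`[A v, C v]`, `E[c(Y) 1{p_c ≤ w}] = ∑_v v (min (C v) w - min (A v) w)`.
For `w = e^λ/(M-1)` and any `K ≥ e^{-w(M-1)}`, such as `K = e^{-e^λ}(e^λ+1)`, the first expectation
minus `(1-K) w⁻¹` times the third minus `K` times the second is `∑_v v (G(A v) - G(C v))`, where
`G t = (1-t)^M + (1-K) w⁻¹ min t w + K t - 1`. Now `G ≤ 0` on `[0,1]` (convexity below `w`, and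
`(1-t)^{M-1} ≤ e^{-w(M-1)}` above), `G 1 = 0`, and `C` of a value is `A` of the next one, so Abel
summation over the values in increasing order shows that this sum is nonpositive.
The second inequality only needs `D̃(1,Q) = E[d(X,Y)] ≤ d_max` and `D̃ ≥ 0`.
-/

open MeasureTheory

/-- The pairwise correct probability `p_c(x,y,u)` with respect to the pmf `Q` on `Y`:
`p_c(x,y,u) = Q{y' : d(x,y') < d(x,y)} + u * Q{y' : d(x,y') = d(x,y)}`. -/
noncomputable def pc {X Y : Type*} [Fintype Y] (Q : Y → ℝ) (d : X → Y → ℝ)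
    (x : X) (y : Y) (u : ℝ) : ℝ :=
  (∑ y' : Y, if d x y' < d x y then Q y' else 0)
    + u * (∑ y' : Y, if d x y' = d x y then Q y' else 0)

/-- The functional `D̃(w,Q) = w⁻¹ ⬝ E_{P ⊗ Q ⊗ Unif[0,1]}[ d(X,Y) ⬝ 1{p_c(X,Y,U) ≤ w} ]`. -/
noncomputable def Dtilde {X Y : Type*} [Fintype X] [Fintype Y]
    (P : X → ℝ) (Q : Y → ℝ) (d : X → Y → ℝ) (w : ℝ) : ℝ :=
  w⁻¹ * ∑ x : X, ∑ y : Y, P x * Q y * d x y *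
    (∫ u in Set.Icc (0:ℝ) 1, if pc Q d x y u ≤ w then (1:ℝ) else 0)

open Finset

theorem sum_mul_le_of_forall_le {ι : Type*} [Fintype ι] {p f : ι → ℝ} (hp0 : ∀ i, 0 ≤ p i)
    (hp1 : ∑ i, p i = 1) {b : ℝ} (hf : ∀ i, f i ≤ b) : ∑ i, p i * f i ≤ b :=
  calc ∑ i, p i * f i ≤ ∑ i, p i * b :=
        sum_le_sum fun i _ => mul_le_mul_of_nonneg_left (hf i) (hp0 i)
    _ = b := by rw [← sum_mul, hp1, one_mul]

section Mass

variable {Y : Type*} [Fintype Y] (Q : Y → ℝ)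

noncomputable def massOf (p : Y → Prop) [DecidablePred p] : ℝ := ∑ y, if p y then Q y else 0

variable {Q}

theorem massOf_congr {p q : Y → Prop} [DecidablePred p] [DecidablePred q]
    (h : ∀ y, p y ↔ q y) : massOf Q p = massOf Q q :=
  sum_congr rfl fun y _ => if_congr (h y) rfl rfl

theorem massOf_nonneg (hQ0 : ∀ y, 0 ≤ Q y) (p : Y → Prop) [DecidablePred p] :
    0 ≤ massOf Q p :=
  sum_nonneg fun y _ => by split_ifs <;> simp [hQ0 y]

theorem massOf_le_sum (hQ0 : ∀ y, 0 ≤ Q y) (p : Y → Prop) [DecidablePred p] :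
    massOf Q p ≤ ∑ y, Q y :=
  sum_le_sum fun y _ => by split_ifs <;> simp [hQ0 y]

theorem massOf_of_forall {p : Y → Prop} [DecidablePred p] (h : ∀ y, p y) :
    massOf Q p = ∑ y, Q y :=
  sum_congr rfl fun y _ => if_pos (h y)

theorem massOf_of_iff_or {p q r : Y → Prop} [DecidablePred p] [DecidablePred q]
    [DecidablePred r] (hr : ∀ y, r y ↔ p y ∨ q y) (hpq : ∀ y, p y → ¬ q y) :
    massOf Q r = massOf Q p + massOf Q q := by
  rw [massOf, massOf, massOf, ← sum_add_distrib]
  refine sum_congr rfl fun y _ => ?_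
  by_cases hp : p y
  · simp [hp, hpq y hp, (hr y).2 (Or.inl hp)]
  · by_cases hq : q y <;> simp [hp, hq, hr y]

theorem massOf_compl {p q : Y → Prop} [DecidablePred p] [DecidablePred q]
    (h : ∀ y, q y ↔ ¬ p y) : massOf Q q = ∑ y, Q y - massOf Q p := by
  rw [eq_sub_iff_add_eq, add_comm, ← massOf_of_forall (p := fun _ => True) (fun _ => trivial)]
  exact (massOf_of_iff_or (fun y => by simp [h y, em]) fun y hp hq => (h y).1 hq hp).symm

theorem sum_mul_comp_eq_sum_massOf {V : Finset ℝ} (g : Y → ℝ) (hV : ∀ y, g y ∈ V)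
    (h : ℝ → ℝ) : ∑ y, Q y * h (g y) = ∑ v ∈ V, massOf Q (g · = v) * h v := by
  simp only [massOf, sum_mul, ite_mul, zero_mul]
  rw [sum_comm]
  refine sum_congr rfl fun y _ => ?_
  rw [sum_ite_eq V (g y) (fun v => Q y * h v), if_pos (hV y)]

theorem sum_mul_eq_sum_massOf {V : Finset ℝ} (g : Y → ℝ) (hV : ∀ y, g y ∈ V) :
    ∑ y, Q y * g y = ∑ v ∈ V, v * massOf Q (g · = v) := by
  simpa [mul_comm] using sum_mul_comp_eq_sum_massOf (Q := Q) g hV id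

theorem massOf_pi_forall {M : ℕ} (p : Y → Prop) [DecidablePred p] :
    massOf (fun f : Fin M → Y => ∏ i, Q (f i)) (fun f => ∀ i, p (f i)) = massOf Q p ^ M := by
  rw [massOf, massOf, Fintype.sum_pow]
  exact sum_congr rfl fun f _ => by rw [Fintype.prod_ite_zero]; congr

theorem sum_prod_mul_inf'_eq {M : ℕ} (hM : 0 < M) (c : Y → ℝ) :
    ∑ f : Fin M → Y, (∏ i, Q (f i)) * univ.inf' ⟨⟨0, hM⟩, mem_univ _⟩ (fun i => c (f i))
      = ∑ v ∈ univ.image c, v * (massOf Q (v ≤ c ·) ^ M - massOf Q (v < c ·) ^ M) := by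
  set H : (univ : Finset (Fin M)).Nonempty := ⟨⟨0, hM⟩, mem_univ _⟩
  have hmem (f : Fin M → Y) : univ.inf' H (fun i => c (f i)) ∈ univ.image c := by
    obtain ⟨i, -, hi⟩ := exists_mem_eq_inf' H fun i => c (f i)
    exact hi ▸ mem_image_of_mem c (mem_univ _)
  rw [sum_mul_eq_sum_massOf _ hmem]
  refine sum_congr rfl fun v _ => ?_
  rw [← massOf_pi_forall, ← massOf_pi_forall]
  congr 1
  rw [eq_sub_iff_add_eq', eq_comm]
  have hle (f : Fin M → Y) : (∀ i, v ≤ c (f i)) ↔ v ≤ univ.inf' H (fun i => c (f i)) := by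
    simp [le_inf'_iff]
  have hlt (f : Fin M → Y) : (∀ i, v < c (f i)) ↔ v < univ.inf' H (fun i => c (f i)) := by
    simp [lt_inf'_iff]
  refine massOf_of_iff_or (fun f => ?_) (fun f h => ((hlt f).1 h).ne')
  rw [hle, hlt, le_iff_lt_or_eq, eq_comm]

variable {c : Y → ℝ} {φ : ℝ → ℝ}

theorem sum_mul_sub_le_of_forall_lt (hφ : ∀ v, φ (massOf Q (c · < v)) ≤ 0) (V : Finset ℝ) :
    ∀ t r, 0 ≤ r → (∀ v ∈ V, 0 ≤ v ∧ v ≤ r ∧ v < t) → (∀ y, c y < t → c y ∈ V) →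
      ∑ v ∈ V, v * (φ (massOf Q (c · < v)) - φ (massOf Q (c · ≤ v)))
        ≤ -(r * φ (massOf Q (c · < t))) := by
  -- peel off the largest value `m`: no value of `c` lies in `(m, t)`, so `Q{c ≤ m} = Q{c < t}`
  induction V using Finset.induction_on_max with
  | empty =>
    intro t r hr _ _
    rw [sum_empty, neg_nonneg]
    exact mul_nonpos_of_nonneg_of_nonpos hr (hφ t)
  | insert m V hm ih =>
    intro t r hr hV hcV
    obtain ⟨hm0, hmr, hmt⟩ := hV m (mem_insert_self m V)
    have hC : massOf Q (c · ≤ m) = massOf Q (c · < t) := by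
      refine massOf_congr fun y => ⟨fun h => h.trans_lt hmt, fun h => ?_⟩
      rcases mem_insert.1 (hcV y h) with h' | h'
      exacts [h'.le, (hm _ h').le]
    have hV' := ih m m hm0 (fun v hv => ⟨(hV v (mem_insert_of_mem hv)).1, (hm v hv).le, hm v hv⟩)
      fun y hy => (mem_insert.1 (hcV y (hy.trans hmt))).resolve_left hy.ne
    rw [sum_insert fun h => lt_irrefl m (hm m h), hC]
    linarith [mul_le_mul_of_nonpos_right hmr (hφ t)]

theorem sum_image_mul_sub_nonpos (hc : ∀ y, 0 ≤ c y) (hφ : ∀ v, φ (massOf Q (c · < v)) ≤ 0)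
    (hφ1 : φ (∑ y, Q y) = 0) :
    ∑ v ∈ univ.image c, v * (φ (massOf Q (c · < v)) - φ (massOf Q (c · ≤ v))) ≤ 0 := by
  have hle (y : Y) : c y ≤ ∑ y, c y := single_le_sum (fun y _ => hc y) (mem_univ y)
  have hlt (y : Y) : c y < ∑ y, c y + 1 := (hle y).trans_lt (lt_add_one _)
  have h := sum_mul_sub_le_of_forall_lt hφ (univ.image c) (∑ y, c y + 1) (∑ y, c y)
    (sum_nonneg fun y _ => hc y)
    (fun v hv => by obtain ⟨y, -, rfl⟩ := mem_image.1 hv; exact ⟨hc y, hle y, hlt y⟩)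
    fun y _ => mem_image_of_mem c (mem_univ y)
  rwa [massOf_of_forall hlt, hφ1, mul_zero, neg_zero] at h

end Mass

theorem mul_integral_Icc_ite_add_mul_le {A B : ℝ} (hB : 0 ≤ B) (w : ℝ) :
    B * ∫ u in Set.Icc (0:ℝ) 1, (if A + u * B ≤ w then (1:ℝ) else 0)
      = min (A + B) w - min A w := by
  rcases hB.eq_or_lt with rfl | hB
  · simp
  have hind : (fun u : ℝ => if A + u * B ≤ w then (1:ℝ) else 0)
      = (Set.Iic ((w - A) / B)).indicator 1 := by
    ext u
    simp [Set.indicator_apply, le_div_iff₀ hB, ← le_sub_iff_add_le']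
  have hset : Set.Icc (0:ℝ) 1 ∩ Set.Iic ((w - A) / B) = Set.Icc 0 (min 1 ((w - A) / B)) := by
    ext u
    simp [and_assoc]
  rw [hind, setIntegral_indicator measurableSet_Iic, hset, Pi.one_def, setIntegral_const,
    Real.volume_real_Icc, smul_eq_mul, mul_one, sub_zero, mul_max_of_nonneg _ _ hB.le,
    mul_min_of_nonneg _ _ hB.le, mul_div_cancel₀ _ hB.ne', mul_one, mul_zero]
  simp only [min_def, max_def]
  split_ifs <;> linarith

theorem one_sub_pow_le_mul_one_sub {M : ℕ} (hM : 0 < M) {w t K : ℝ} (hwt : w ≤ t) (ht1 : t ≤ 1)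
    (hK : Real.exp (-(w * ((M:ℝ) - 1))) ≤ K) :
    (1 - t) ^ M ≤ K * (1 - t) := by
  have h0 : 0 ≤ 1 - t := sub_nonneg.2 ht1
  have hpow : (1 - t) ^ (M - 1) ≤ K :=
    calc (1 - t) ^ (M - 1) ≤ (1 - w) ^ (M - 1) := pow_le_pow_left₀ h0 (by linarith) _
      _ ≤ Real.exp (-w) ^ (M - 1) :=
          pow_le_pow_left₀ (by linarith) (by linarith [Real.add_one_le_exp (-w)]) _
      _ = Real.exp (-(w * ((M:ℝ) - 1))) := by
          rw [← Real.exp_nat_mul, Nat.cast_sub hM, Nat.cast_one]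
          ring_nf
      _ ≤ K := hK
  calc (1 - t) ^ M = (1 - t) ^ (M - 1) * (1 - t) := by rw [← pow_succ, Nat.sub_add_cancel hM]
    _ ≤ K * (1 - t) := mul_le_mul_of_nonneg_right hpow h0

theorem one_sub_pow_add_min_le_one {M : ℕ} (hM : 0 < M) {w t K : ℝ} (hw0 : 0 < w)
    (hw1 : w ≤ 1) (hK : Real.exp (-(w * ((M:ℝ) - 1))) ≤ K) (ht0 : 0 ≤ t) (ht1 : t ≤ 1) :
    (1 - t) ^ M + (1 - K) / w * min t w + K * t ≤ 1 := by
  rcases le_total w t with hwt | htw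
  · rw [min_eq_right hwt, div_mul_cancel₀ _ hw0.ne']
    linarith [one_sub_pow_le_mul_one_sub hM hwt ht1 hK]
  rw [min_eq_left htw]
  obtain ⟨θ, hθ0, hθ1, rfl⟩ : ∃ θ, 0 ≤ θ ∧ θ ≤ 1 ∧ t = θ * w :=
    ⟨t / w, div_nonneg ht0 hw0.le, (div_le_one hw0).2 htw, (div_mul_cancel₀ _ hw0.ne').symm⟩
  -- convexity of `s ↦ s ^ M` between `1` and `1 - w`, at the point `1 - θ w`
  have hconv := (convexOn_pow M).2 (Set.mem_Ici.2 zero_le_one) (Set.mem_Ici.2 (sub_nonneg.2 hw1))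
    (sub_nonneg.2 hθ1) hθ0 (sub_add_cancel 1 θ)
  simp only [smul_eq_mul, one_pow, mul_one] at hconv
  rw [show 1 - θ + θ * (1 - w) = 1 - θ * w by ring] at hconv
  rw [show (1 - K) / w * (θ * w) = (1 - K) * θ by field_simp]
  linarith [mul_le_mul_of_nonneg_left (one_sub_pow_le_mul_one_sub hM le_rfl hw1 hK) hθ0]

section Distortion

variable {X Y : Type*} [Fintype Y]

noncomputable def truncatedDistortion (Q : Y → ℝ) (d : X → Y → ℝ) (x : X) (w : ℝ) : ℝ :=
  ∑ y, Q y * d x y * ∫ u in Set.Icc (0:ℝ) 1, if pc Q d x y u ≤ w then (1:ℝ) else 0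

variable {Q : Y → ℝ}

theorem pc_eq_massOf (d : X → Y → ℝ) (x : X) (y : Y) (u : ℝ) :
    pc Q d x y u = massOf Q (d x · < d x y) + u * massOf Q (d x · = d x y) := rfl

theorem truncatedDistortion_eq_sum_image (hQ0 : ∀ y, 0 ≤ Q y) (d : X → Y → ℝ) (x : X) (w : ℝ) :
    truncatedDistortion Q d x w
      = ∑ v ∈ univ.image (d x),
          v * (min (massOf Q (d x · ≤ v)) w - min (massOf Q (d x · < v)) w) := by
  have h := sum_mul_comp_eq_sum_massOf (Q := Q) (d x) (fun y => mem_image_of_mem _ (mem_univ y))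
    fun v => v * ∫ u in Set.Icc (0:ℝ) 1,
      if massOf Q (d x · < v) + u * massOf Q (d x · = v) ≤ w then (1:ℝ) else 0
  refine (sum_congr rfl fun y _ => mul_assoc _ _ _).trans (h.trans (sum_congr rfl fun v _ => ?_))
  rw [mul_left_comm, mul_integral_Icc_ite_add_mul_le (massOf_nonneg hQ0 _),
    ← massOf_of_iff_or (fun y => le_iff_lt_or_eq) fun y h => h.ne]

theorem truncatedDistortion_one (hQ0 : ∀ y, 0 ≤ Q y) (hQ1 : ∑ y, Q y = 1)
    (d : X → Y → ℝ) (x : X) : truncatedDistortion Q d x 1 = ∑ y, Q y * d x y := by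
  refine sum_congr rfl fun y _ => ?_
  have hpc : ∀ u ∈ Set.Icc (0:ℝ) 1, pc Q d x y u ≤ 1 := by
    intro u hu
    have hB := massOf_nonneg hQ0 (d x · = d x y)
    calc pc Q d x y u ≤ massOf Q (d x · < d x y) + massOf Q (d x · = d x y) := by
          rw [pc_eq_massOf]; linarith [mul_le_of_le_one_left hB hu.2]
      _ = massOf Q (d x · ≤ d x y) :=
          (massOf_of_iff_or (fun y => le_iff_lt_or_eq) fun y h => h.ne).symm
      _ ≤ 1 := hQ1 ▸ massOf_le_sum hQ0 _
  rw [setIntegral_congr_fun measurableSet_Icc (g := fun _ => (1:ℝ)) fun u hu => if_pos (hpc u hu),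
    setIntegral_const, Real.volume_real_Icc]
  norm_num

theorem truncatedDistortion_nonneg (hQ0 : ∀ y, 0 ≤ Q y) {d : X → Y → ℝ} {x : X}
    (hd : ∀ y, 0 ≤ d x y) (w : ℝ) : 0 ≤ truncatedDistortion Q d x w :=
  sum_nonneg fun y _ => mul_nonneg (mul_nonneg (hQ0 y) (hd y))
    (setIntegral_nonneg measurableSet_Icc fun u _ => by split_ifs <;> norm_num)

theorem sum_prod_mul_inf'_le_truncatedDistortion (hQ0 : ∀ y, 0 ≤ Q y) (hQ1 : ∑ y, Q y = 1)
    {d : X → Y → ℝ} {x : X} (hd : ∀ y, 0 ≤ d x y) {M : ℕ} (hM : 0 < M) {w K : ℝ} (hw0 : 0 < w)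
    (hw1 : w ≤ 1) (hK : Real.exp (-(w * ((M:ℝ) - 1))) ≤ K) :
    ∑ f : Fin M → Y, (∏ i, Q (f i)) * univ.inf' ⟨⟨0, hM⟩, mem_univ _⟩ (fun i => d x (f i))
      ≤ (1 - K) * w⁻¹ * truncatedDistortion Q d x w + K * ∑ y, Q y * d x y := by
  set A := fun v => massOf Q (d x · < v)
  set C := fun v => massOf Q (d x · ≤ v)
  set G : ℝ → ℝ := fun t => (1 - t) ^ M + (1 - K) / w * min t w + K * t - 1
  have hG (v : ℝ) : G (A v) ≤ 0 := by
    have := one_sub_pow_add_min_le_one hM hw0 hw1 hK (massOf_nonneg hQ0 _)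
      (hQ1 ▸ massOf_le_sum hQ0 (d x · < v))
    simp only [G]
    linarith
  have hG1 : G (∑ y, Q y) = 0 := by
    simp only [G, hQ1, sub_self, zero_pow hM.ne', min_eq_right hw1, div_mul_cancel₀ _ hw0.ne']
    ring
  have hlevel (v : ℝ) :
      v * (massOf Q (v ≤ d x ·) ^ M - massOf Q (v < d x ·) ^ M)
        = v * (G (A v) - G (C v)) + (1 - K) * w⁻¹ * (v * (min (C v) w - min (A v) w))
          + K * (v * massOf Q (d x · = v)) := by
    simp only [G, A, C]
    rw [massOf_compl (p := (d x · < v)) fun y => not_lt.symm,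
      massOf_compl (p := (d x · ≤ v)) fun y => not_le.symm, hQ1,
      massOf_of_iff_or (r := (d x · ≤ v)) (fun y => le_iff_lt_or_eq) fun y h => h.ne]
    ring
  rw [sum_prod_mul_inf'_eq hM, truncatedDistortion_eq_sum_image hQ0,
    sum_mul_eq_sum_massOf (d x) fun y => mem_image_of_mem _ (mem_univ y),
    sum_congr rfl fun v _ => hlevel v,
    sum_add_distrib, sum_add_distrib, ← mul_sum, ← mul_sum]
  linarith [sum_image_mul_sub_nonpos hd hG hG1]

end Distortion

section Dtilde

variable {X Y : Type*} [Fintype X] [Fintype Y] {P : X → ℝ} {Q : Y → ℝ} {d : X → Y → ℝ}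

theorem Dtilde_eq (w : ℝ) :
    Dtilde P Q d w = w⁻¹ * ∑ x, P x * truncatedDistortion Q d x w := by
  simp only [Dtilde, truncatedDistortion, mul_sum, mul_assoc]

theorem Dtilde_nonneg (hP0 : ∀ x, 0 ≤ P x) (hQ0 : ∀ y, 0 ≤ Q y) (hd : ∀ x y, 0 ≤ d x y)
    {w : ℝ} (hw : 0 ≤ w) : 0 ≤ Dtilde P Q d w := by
  rw [Dtilde_eq]
  exact mul_nonneg (inv_nonneg.2 hw) <|
    sum_nonneg fun x _ => mul_nonneg (hP0 x) (truncatedDistortion_nonneg hQ0 (hd x) w)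

theorem Dtilde_one_le (hP0 : ∀ x, 0 ≤ P x) (hP1 : ∑ x, P x = 1) (hQ0 : ∀ y, 0 ≤ Q y)
    (hQ1 : ∑ y, Q y = 1) {dmax : ℝ} (hdmax : ∀ x y, d x y ≤ dmax) : Dtilde P Q d 1 ≤ dmax := by
  rw [Dtilde_eq, inv_one, one_mul]
  refine sum_mul_le_of_forall_le hP0 hP1 fun x => ?_
  rw [truncatedDistortion_one hQ0 hQ1]
  exact sum_mul_le_of_forall_le hQ0 hQ1 (hdmax x)

end Dtilde

/-- Random coding bound: with `M ≥ 2` i.i.d. codewords from `Q`, `R = log (M-1)`, bounded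
distortion `d ≤ d_max`, and any `λ < R`,
`E[min_i d(X,Y_i)] ≤ D̃(e^{−(R−λ)},Q) + (D̃(1,Q) − D̃(e^{−(R−λ)},Q)) e^{−e^λ}(e^λ+1)`
`≤ D̃(e^{−(R−λ)},Q) + d_max e^{−e^λ}(e^λ+1)`. -/
theorem random_coding_bound {X Y : Type*} [Fintype X] [Fintype Y]
    (P : X → ℝ) (hP0 : ∀ x, 0 ≤ P x) (hP1 : ∑ x : X, P x = 1)
    (Q : Y → ℝ) (hQ0 : ∀ y, 0 ≤ Q y) (hQ1 : ∑ y : Y, Q y = 1)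
    (d : X → Y → ℝ) (hd : ∀ x y, 0 ≤ d x y)
    (dmax : ℝ) (hdmax : ∀ x y, d x y ≤ dmax)
    (M : ℕ) (hM : 2 ≤ M) (lam : ℝ) (hlam : lam < Real.log ((M:ℝ) - 1)) :
    (∑ x : X, P x * ∑ f : Fin M → Y, (∏ i : Fin M, Q (f i)) *
        ((Finset.univ : Finset (Fin M)).inf' ⟨⟨0, by omega⟩, Finset.mem_univ _⟩
          fun i => d x (f i)))
      ≤ Dtilde P Q d (Real.exp (-(Real.log ((M:ℝ) - 1) - lam)))
        + (Dtilde P Q d 1 - Dtilde P Q d (Real.exp (-(Real.log ((M:ℝ) - 1) - lam))))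
          * (Real.exp (-(Real.exp lam)) * (Real.exp lam + 1))
    ∧ Dtilde P Q d (Real.exp (-(Real.log ((M:ℝ) - 1) - lam)))
        + (Dtilde P Q d 1 - Dtilde P Q d (Real.exp (-(Real.log ((M:ℝ) - 1) - lam))))
          * (Real.exp (-(Real.exp lam)) * (Real.exp lam + 1))
      ≤ Dtilde P Q d (Real.exp (-(Real.log ((M:ℝ) - 1) - lam)))
        + dmax * (Real.exp (-(Real.exp lam)) * (Real.exp lam + 1)) := by
  have hM1 : (0:ℝ) < (M:ℝ) - 1 := by
    have : (2:ℝ) ≤ M := by exact_mod_cast hM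
    linarith
  set E := Real.exp lam
  set w := Real.exp (-(Real.log ((M:ℝ) - 1) - lam)) with hw
  set K := Real.exp (-E) * (E + 1)
  have hwM : w * ((M:ℝ) - 1) = E := by
    rw [hw, neg_sub, Real.exp_sub, Real.exp_log hM1, div_mul_cancel₀ _ hM1.ne']
  have hw0 : 0 < w := Real.exp_pos _
  have hw1 : w ≤ 1 := Real.exp_le_one_iff.2 (by linarith)
  have hK : Real.exp (-(w * ((M:ℝ) - 1))) ≤ K := by
    rw [hwM]
    exact le_mul_of_one_le_right (Real.exp_pos _).le (by linarith [Real.exp_pos lam])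
  refine ⟨?_, ?_⟩
  · calc _ ≤ ∑ x, P x * ((1 - K) * w⁻¹ * truncatedDistortion Q d x w
              + K * truncatedDistortion Q d x 1) := by
          refine sum_le_sum fun x _ => mul_le_mul_of_nonneg_left ?_ (hP0 x)
          rw [truncatedDistortion_one hQ0 hQ1]
          exact sum_prod_mul_inf'_le_truncatedDistortion hQ0 hQ1 (hd x) (by omega) hw0 hw1 hK
      _ = Dtilde P Q d w + (Dtilde P Q d 1 - Dtilde P Q d w) * K := by
          simp only [Dtilde_eq, inv_one, one_mul, mul_sum, ← sum_add_distrib, ← sum_sub_distrib,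
            sum_mul]
          exact sum_congr rfl fun x _ => by ring
  · have hD1 := Dtilde_one_le hP0 hP1 hQ0 hQ1 hdmax
    have hDw := Dtilde_nonneg hP0 hQ0 hd hw0.le
    linarith [mul_le_mul_of_nonneg_right (by linarith : Dtilde P Q d 1 - Dtilde P Q d w ≤ dmax)
      (by positivity : 0 ≤ K)]
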